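/- arXiv:1404.5149 — 3 statements merged into one kernel-verified Lean document; each statement's English description precedes it below -/
import Mathlib

section
/- Let A, B be elements of an associative algebra over a field of characteristic zero, and let D be a derivation of the algebra. Then for every m ≥ 1, ∑_{k=0}^{m-1} ((-1)^k / ((m-k)! k!)) · (∑_{i=0}^{m-k-1} A^i (D A) A^{m-k-1-i}) B A^k, when traced against a trace functional Tr satisfying Tr(XY) = Tr(YX), equals (1/m!) Tr((D A) · (ad_A)^{m-1} B), where ad_A X = A X - X A. -/
open Finset

lemma adPow_expand {𝒜 : Type*} [Ring 𝒜] (A B : 𝒜) (n : ℕ) :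
    (fun X => A * X - X * A)^[n] B
      = ∑ j ∈ Finset.range (n+1),
          ((-1:ℤ)^(n-j) * (n.choose j)) • (A^j * B * A^(n-j)) := by
  induction n with
  | zero => simp
  | succ n ih =>
    rw [Function.iterate_succ_apply', ih]
    show A * (∑ j ∈ Finset.range (n+1), ((-1:ℤ)^(n-j) * (n.choose j)) • (A^j * B * A^(n-j)))
        - (∑ j ∈ Finset.range (n+1), ((-1:ℤ)^(n-j) * (n.choose j)) • (A^j * B * A^(n-j))) * A
        = _
    have hL : A * ∑ j ∈ Finset.range (n+1),
          ((-1:ℤ)^(n-j) * (n.choose j)) • (A^j * B * A^(n-j))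
        = ∑ j ∈ Finset.range (n+1),
          ((-1:ℤ)^(n-j) * (n.choose j)) • (A^(j+1) * B * A^(n+1-(j+1))) := by
      rw [Finset.mul_sum]
      refine Finset.sum_congr rfl fun j hj => ?_
      rw [mul_smul_comm]
      congr 1
      rw [Nat.succ_sub_succ, ← mul_assoc, ← mul_assoc, ← pow_succ']
    have hR : (∑ j ∈ Finset.range (n+1),
          ((-1:ℤ)^(n-j) * (n.choose j)) • (A^j * B * A^(n-j))) * A
        = ∑ j ∈ Finset.range (n+1),
          ((-1:ℤ)^(n-j) * (n.choose j)) • (A^j * B * A^(n+1-j)) := by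
      rw [Finset.sum_mul]
      refine Finset.sum_congr rfl fun j hj => ?_
      rw [smul_mul_assoc]
      congr 1
      rw [mul_assoc, ← pow_succ]
      congr 2
      simp only [Finset.mem_range] at hj
      omega
    rw [hL, hR]
    rw [Finset.sum_range_succ' (fun j => ((-1:ℤ)^(n+1-j) * ((n+1).choose j)) • (A^j * B * A^(n+1-j))) (n+1)]
    rw [Finset.sum_range_succ' (fun j => ((-1:ℤ)^(n-j) * (n.choose j)) • (A^j * B * A^(n+1-j))) n]
    -- extend the second shifted sum from range n to range (n+1): top term vanishes
    have hext : ∑ j ∈ Finset.range n, ((-1:ℤ)^(n-(j+1)) * (n.choose (j+1))) • (A^(j+1) * B * A^(n+1-(j+1)))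
        = ∑ j ∈ Finset.range (n+1), ((-1:ℤ)^(n-(j+1)) * (n.choose (j+1))) • (A^(j+1) * B * A^(n+1-(j+1))) := by
      rw [Finset.sum_range_succ]
      simp [Nat.choose_succ_self]
    rw [hext]
    rw [sub_add_eq_sub_sub, ← Finset.sum_sub_distrib]
    have hterm : ∀ j ∈ Finset.range (n+1),
        ((-1:ℤ)^(n-j) * (n.choose j)) • (A^(j+1) * B * A^(n+1-(j+1)))
          - ((-1:ℤ)^(n-(j+1)) * (n.choose (j+1))) • (A^(j+1) * B * A^(n+1-(j+1)))
        = ((-1:ℤ)^(n+1-(j+1)) * ((n+1).choose (j+1))) • (A^(j+1) * B * A^(n+1-(j+1))) := by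
      intro j hj
      simp only [Finset.mem_range] at hj
      rw [← sub_smul]
      congr 1
      have hj' : j ≤ n := by omega
      rw [Nat.choose_succ_succ]
      rcases eq_or_lt_of_le hj' with h | h
      · subst h
        simp [Nat.choose_succ_self]
      · have h1 : n - j = (n - (j+1)) + 1 := by omega
        have h2 : n + 1 - (j+1) = n - j := by omega
        rw [h1, h2, h1]
        push_cast
        ring
    rw [Finset.sum_congr rfl hterm]
    simp [pow_succ, sub_eq_add_neg]

lemma alt_sum_choose (m n : ℕ) (h : n < m) :
    ∑ k ∈ Finset.range (n+1), (-1:ℤ)^k * m.choose k = (-1)^n * (m-1).choose n := by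
  induction n with
  | zero => simp
  | succ n ih =>
    rw [Finset.sum_range_succ, ih (by omega)]
    have hm : m - 1 + 1 = m := by omega
    have hp : m.choose (n+1) = (m-1).choose n + (m-1).choose (n+1) := by
      conv_lhs => rw [← hm]
      rw [Nat.choose_succ_succ]
    rw [hp]
    push_cast
    ring


/-- Equation (Rm) in the proof of Lemma 4.6 of Cafasso–Wu: rewriting the traced
double sum into the adjoint-power form `(1/m!) Tr((D A)·(ad_A)^{m-1} B)`. -/
theorem traced_sum_eq_adjoint_power
    {𝕜 : Type*} [Field 𝕜] [CharZero 𝕜]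
    {𝒜 : Type*} [Ring 𝒜] [Algebra 𝕜 𝒜]
    (D : 𝒜 →ₗ[𝕜] 𝒜) (hD : ∀ x y : 𝒜, D (x * y) = D x * y + x * D y)
    (Tr : 𝒜 →ₗ[𝕜] 𝕜) (hTr : ∀ x y : 𝒜, Tr (x * y) = Tr (y * x))
    (A B : 𝒜) (m : ℕ) (hm : 1 ≤ m) :
    Tr (∑ k ∈ Finset.range m,
        (((-1 : 𝕜) ^ k / (((m - k).factorial : 𝕜) * (k.factorial : 𝕜))) •
          ((∑ i ∈ Finset.range (m - k), A ^ i * D A * A ^ (m - k - 1 - i)) * B * A ^ k)))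
      = ((m.factorial : 𝕜))⁻¹ *
          Tr (D A * ((fun X => A * X - X * A)^[m - 1] B)) := by
  have step1 : Tr (∑ k ∈ Finset.range m,
        (((-1 : 𝕜) ^ k / (((m - k).factorial : 𝕜) * (k.factorial : 𝕜))) •
          ((∑ i ∈ Finset.range (m - k), A ^ i * D A * A ^ (m - k - 1 - i)) * B * A ^ k)))
      = ∑ k ∈ Finset.range m, ((-1 : 𝕜) ^ k / (((m - k).factorial : 𝕜) * (k.factorial : 𝕜))) *
          ∑ j ∈ Finset.range (m - k), Tr (D A * (A ^ j * B * A ^ (m - 1 - j))) := by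
    rw [map_sum]
    refine Finset.sum_congr rfl fun k hk => ?_
    rw [map_smul, smul_eq_mul]
    congr 1
    simp only [Finset.mem_range] at hk
    rw [Finset.sum_mul, Finset.sum_mul, map_sum]
    calc ∑ i ∈ Finset.range (m - k), Tr (A ^ i * D A * A ^ (m - k - 1 - i) * B * A ^ k)
        = ∑ i ∈ Finset.range (m - k),
            Tr (D A * (A ^ ((m-k) - 1 - i) * B * A ^ (m - 1 - ((m-k) - 1 - i)))) := by
          refine Finset.sum_congr rfl fun i hi => ?_
          simp only [Finset.mem_range] at hi
          have h1 : A ^ i * D A * A ^ (m - k - 1 - i) * B * A ^ k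
              = A ^ i * (D A * (A ^ (m - k - 1 - i) * B * A ^ k)) := by
            simp only [mul_assoc]
          rw [h1, hTr]
          congr 1
          have h3 : m - 1 - (m - k - 1 - i) = k + i := by omega
          rw [h3, pow_add]
          simp only [mul_assoc]
      _ = ∑ j ∈ Finset.range (m - k), Tr (D A * (A ^ j * B * A ^ (m - 1 - j))) :=
          Finset.sum_range_reflect (fun j => Tr (D A * (A ^ j * B * A ^ (m - 1 - j)))) (m - k)
  have step2 : ∑ k ∈ Finset.range m, ((-1 : 𝕜) ^ k / (((m - k).factorial : 𝕜) * (k.factorial : 𝕜))) *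
          ∑ j ∈ Finset.range (m - k), Tr (D A * (A ^ j * B * A ^ (m - 1 - j)))
      = ∑ j ∈ Finset.range m,
          (∑ k ∈ Finset.range (m - j), ((-1 : 𝕜) ^ k / (((m - k).factorial : 𝕜) * (k.factorial : 𝕜)))) *
            Tr (D A * (A ^ j * B * A ^ (m - 1 - j))) := by
    simp only [Finset.mul_sum, Finset.sum_mul]
    exact Finset.sum_comm' (by intro k j; simp only [Finset.mem_range]; omega)
  have coeff : ∀ j, j < m →
      (∑ k ∈ Finset.range (m - j), ((-1 : 𝕜) ^ k / (((m - k).factorial : 𝕜) * (k.factorial : 𝕜))))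
      = ((m.factorial : 𝕜))⁻¹ * ((((-1 : ℤ) ^ (m - 1 - j) * ((m-1).choose j) : ℤ)) : 𝕜) := by
    intro j hj
    have h1 : ∀ k ∈ Finset.range (m - j),
        ((-1 : 𝕜) ^ k / (((m - k).factorial : 𝕜) * (k.factorial : 𝕜)))
        = ((m.factorial : 𝕜))⁻¹ * ((((-1 : ℤ) ^ k * m.choose k : ℤ)) : 𝕜) := by
      intro k hk
      simp only [Finset.mem_range] at hk
      have hkm : k ≤ m := by omega
      have hfac : (m.choose k : 𝕜) * (k.factorial : 𝕜) * ((m - k).factorial : 𝕜)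
          = (m.factorial : 𝕜) := by
        exact_mod_cast congrArg (fun x : ℕ => (x : 𝕜)) (Nat.choose_mul_factorial_mul_factorial hkm)
      have hne1 : (((m - k).factorial : 𝕜)) ≠ 0 := Nat.cast_ne_zero.mpr (Nat.factorial_ne_zero _)
      have hne2 : ((k.factorial : 𝕜)) ≠ 0 := Nat.cast_ne_zero.mpr (Nat.factorial_ne_zero _)
      have hne3 : ((m.factorial : 𝕜)) ≠ 0 := Nat.cast_ne_zero.mpr (Nat.factorial_ne_zero _)
      field_simp
      push_cast
      rw [← hfac]
      ring
    rw [Finset.sum_congr rfl h1, ← Finset.mul_sum]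
    congr 1
    rw [← Int.cast_sum]
    have hmj : m - j = (m - j - 1) + 1 := by omega
    rw [hmj, alt_sum_choose m (m - j - 1) (by omega)]
    have e1 : m - j - 1 = m - 1 - j := by omega
    have e2 : (m - 1).choose (m - j - 1) = (m - 1).choose j := by
      have : m - j - 1 = (m - 1) - j := by omega
      rw [this, Nat.choose_symm (by omega)]
    rw [e2, e1]
  have step4 : ((m.factorial : 𝕜))⁻¹ * Tr (D A * ((fun X => A * X - X * A)^[m - 1] B))
      = ∑ j ∈ Finset.range m,
          (((m.factorial : 𝕜))⁻¹ * ((((-1 : ℤ) ^ (m - 1 - j) * ((m-1).choose j) : ℤ)) : 𝕜)) *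
            Tr (D A * (A ^ j * B * A ^ (m - 1 - j))) := by
    rw [adPow_expand]
    have hm1 : m - 1 + 1 = m := by omega
    rw [hm1, Finset.mul_sum, map_sum, Finset.mul_sum]
    refine Finset.sum_congr rfl fun j hj => ?_
    rw [mul_smul_comm, map_zsmul, zsmul_eq_mul]
    push_cast
    ring
  rw [step1, step2, step4]
  exact Finset.sum_congr rfl fun j hj => by
    rw [coeff j (Finset.mem_range.mp hj)]
end

section
/- Conversely, if Γ₋, Γ₊ are invertible matrix Fourier series with Γ₋ = Id + (strictly negative modes), Γ₊ having only nonnegative modes, and Γ₊ = Γ₋ · g⁻¹γ on S¹, then w := gΓ₋⁻¹ satisfies: γ⁻¹w = Γ₊⁻¹ has only nonnegative modes (so each column of w lies in W = γH₊), and p₊(g⁻¹w) = p₊(Γ₋⁻¹) = Id; i.e. w is the Baker function for W. -/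
open LaurentPolynomial

/-- The `k`-th Fourier (Laurent) coefficient of a matrix-valued loop. -/
noncomputable def matCoeff {n : ℕ} (M : Matrix (Fin n) (Fin n) (LaurentPolynomial ℂ))
    (k : ℤ) : Matrix (Fin n) (Fin n) ℂ :=
  Matrix.of fun i j => (M i j).coeff k

namespace LaurentPolynomial

variable {R : Type*} [Semiring R]

/-- The top mode `k` of `f * g` is reached only as `0 + k`. -/
theorem coeff_mul_of_nonpos_of_le {f g : R[T;T⁻¹]} {k : ℤ}
    (hf : ∀ a : ℤ, 0 < a → f.coeff a = 0) (hg : ∀ b : ℤ, k < b → g.coeff b = 0) :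
    (f * g).coeff k = f.coeff 0 * g.coeff k := by
  simpa using AddMonoidAlgebra.coeff_mul_add_of_uniqueAdd (f := f) (g := g) (a0 := 0) (b0 := k)
    fun a b ha hb hab => by
      have := mt (hf a) (Finsupp.mem_support_iff.mp ha)
      have := mt (hg b) (Finsupp.mem_support_iff.mp hb)
      omega

theorem coeff_mul_of_nonneg_of_ge {f g : R[T;T⁻¹]} {k : ℤ}
    (hf : ∀ a : ℤ, a < 0 → f.coeff a = 0) (hg : ∀ b : ℤ, b < k → g.coeff b = 0) :
    (f * g).coeff k = f.coeff 0 * g.coeff k := by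
  simpa using AddMonoidAlgebra.coeff_mul_add_of_uniqueAdd (f := f) (g := g) (a0 := 0) (b0 := k)
    fun a b ha hb hab => by
      have := mt (hf a) (Finsupp.mem_support_iff.mp ha)
      have := mt (hg b) (Finsupp.mem_support_iff.mp hb)
      omega

end LaurentPolynomial

section matCoeff

variable {n : ℕ} {M N : Matrix (Fin n) (Fin n) (LaurentPolynomial ℂ)}

theorem matCoeff_one (k : ℤ) :
    matCoeff (1 : Matrix (Fin n) (Fin n) (LaurentPolynomial ℂ)) k = if k = 0 then 1 else 0 := by
  ext i j
  by_cases hk : k = 0 <;> by_cases hij : i = j <;>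
    simp [matCoeff, Matrix.one_apply, hk, hij, ← T_zero, eq_comm]

theorem finite_setOf_matCoeff_ne_zero (M : Matrix (Fin n) (Fin n) (LaurentPolynomial ℂ)) :
    {k | matCoeff M k ≠ 0}.Finite := by
  refine (Set.finite_iUnion fun i => Set.finite_iUnion fun j =>
    (M i j).coeff.support.finite_toSet).subset fun k hk => ?_
  obtain ⟨i, j, hij⟩ : ∃ i j, (M i j).coeff k ≠ 0 := by
    by_contra! h
    exact hk (Matrix.ext h)
  simpa using ⟨i, j, hij⟩

theorem matCoeff_mul_of_nonpos_of_le {k : ℤ}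
    (hM : ∀ a : ℤ, 0 < a → matCoeff M a = 0) (hN : ∀ b : ℤ, k < b → matCoeff N b = 0) :
    matCoeff (M * N) k = matCoeff M 0 * matCoeff N k := by
  ext i j
  simp only [matCoeff, Matrix.of_apply, Matrix.mul_apply, AddMonoidAlgebra.coeff_sum,
    Finsupp.finsetSum_apply]
  exact Finset.sum_congr rfl fun l _ => coeff_mul_of_nonpos_of_le
    (fun a ha => congrFun₂ (hM a ha) i l) (fun b hb => congrFun₂ (hN b hb) l j)

theorem matCoeff_mul_of_nonneg_of_ge {k : ℤ}
    (hM : ∀ a : ℤ, a < 0 → matCoeff M a = 0) (hN : ∀ b : ℤ, b < k → matCoeff N b = 0) :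
    matCoeff (M * N) k = matCoeff M 0 * matCoeff N k := by
  ext i j
  simp only [matCoeff, Matrix.of_apply, Matrix.mul_apply, AddMonoidAlgebra.coeff_sum,
    Finsupp.finsetSum_apply]
  exact Finset.sum_congr rfl fun l _ => coeff_mul_of_nonneg_of_ge
    (fun a ha => congrFun₂ (hM a ha) i l) (fun b hb => congrFun₂ (hN b hb) l j)

/-- Compare the top positive mode `K` of `N` on both sides of `M * N = 1`: `M₀ N_K = 0`. -/
theorem matCoeff_pos_eq_zero_of_mul_eq_one (hMN : M * N = 1)
    (hM : ∀ k : ℤ, 0 < k → matCoeff M k = 0) (hM0 : IsUnit (matCoeff M 0)) :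
    ∀ k : ℤ, 0 < k → matCoeff N k = 0 := by
  by_contra! hN
  obtain ⟨b, hb⟩ := (finite_setOf_matCoeff_ne_zero N).bddAbove
  obtain ⟨K, ⟨hK_pos, hK⟩, hK_max⟩ := Int.exists_greatest_of_bdd
    (P := fun k => 0 < k ∧ matCoeff N k ≠ 0) ⟨b, fun k hk => hb hk.2⟩ hN
  have hN_above : ∀ k : ℤ, K < k → matCoeff N k = 0 := fun k hk => by
    by_contra h
    exact (hK_max k ⟨hK_pos.trans hk, h⟩).not_gt hk
  have hMN_K := matCoeff_mul_of_nonpos_of_le hM hN_above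
  rw [hMN, matCoeff_one, if_neg hK_pos.ne'] at hMN_K
  exact hK (hM0.mul_right_eq_zero.mp hMN_K.symm)

theorem matCoeff_neg_eq_zero_of_mul_eq_one (hMN : M * N = 1)
    (hM : ∀ k : ℤ, k < 0 → matCoeff M k = 0) (hM0 : IsUnit (matCoeff M 0)) :
    ∀ k : ℤ, k < 0 → matCoeff N k = 0 := by
  by_contra! hN
  obtain ⟨b, hb⟩ := (finite_setOf_matCoeff_ne_zero N).bddBelow
  obtain ⟨K, ⟨hK_neg, hK⟩, hK_min⟩ := Int.exists_least_of_bdd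
    (P := fun k => k < 0 ∧ matCoeff N k ≠ 0) ⟨b, fun k hk => hb hk.2⟩ hN
  have hN_below : ∀ k : ℤ, k < K → matCoeff N k = 0 := fun k hk => by
    by_contra h
    exact (hK_min k ⟨hk.trans hK_neg, h⟩).not_gt hk
  have hMN_K := matCoeff_mul_of_nonneg_of_ge hM hN_below
  rw [hMN, matCoeff_one, if_neg hK_neg.ne] at hMN_K
  exact hK (hM0.mul_right_eq_zero.mp hMN_K.symm)

end matCoeff

/-- Converse direction of Proposition 2.7 of Cafasso–Wu: a solution
`Γ₋ = Id + (negative modes)`, `Γ₊` (nonnegative modes, invertible constant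
term) of the Riemann–Hilbert problem `Γ₊ = Γ₋ · g⁻¹γ` yields the Baker
function `w := gΓ₋⁻¹` for `W = γH₊`: `γ⁻¹w = Γ₊⁻¹` has only nonnegative
modes (columns of `w` lie in `W`), and `p₊(g⁻¹w) = p₊(Γ₋⁻¹) = Id`. -/
theorem RH_solution_gives_baker {n : ℕ}
    (g γ Γm Γp : Matrix (Fin n) (Fin n) (LaurentPolynomial ℂ))
    (hg : IsUnit g) (hγ : IsUnit γ) (hΓm : IsUnit Γm) (hΓp : IsUnit Γp)
    -- `Γ₋ = Id + (strictly negative modes)`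
    (hΓm0 : matCoeff Γm 0 = 1) (hΓmpos : ∀ k : ℤ, 0 < k → matCoeff Γm k = 0)
    -- `Γ₊` has only nonnegative modes, with invertible constant term
    (hΓpneg : ∀ k : ℤ, k < 0 → matCoeff Γp k = 0)
    (hΓp0 : IsUnit (matCoeff Γp 0))
    -- the jump relation
    (hjump : Γp = Γm * (Ring.inverse g * γ)) :
    -- `γ⁻¹ w = Γ₊⁻¹` ...
    Ring.inverse γ * (g * Ring.inverse Γm) = Ring.inverse Γp ∧
    -- ... has only nonnegative modes
    (∀ k : ℤ, k < 0 → matCoeff (Ring.inverse γ * (g * Ring.inverse Γm)) k = 0) ∧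
    -- and `p₊(g⁻¹w) = p₊(Γ₋⁻¹) = Id`
    Ring.inverse g * (g * Ring.inverse Γm) = Ring.inverse Γm ∧
    matCoeff (Ring.inverse Γm) 0 = 1 ∧
    (∀ k : ℤ, 0 < k → matCoeff (Ring.inverse Γm) k = 0) := by
  have hw : Ring.inverse γ * (g * Ring.inverse Γm) = Ring.inverse Γp := by
    rw [hjump, Ring.inverse_mul (Or.inl hΓm), Ring.inverse_mul (Or.inr hγ),
      Ring.inverse_inverse hg, mul_assoc]
  have hΓm_inv := Ring.mul_inverse_cancel Γm hΓm
  have hΓm_inv_pos : ∀ k : ℤ, 0 < k → matCoeff (Ring.inverse Γm) k = 0 :=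
    matCoeff_pos_eq_zero_of_mul_eq_one hΓm_inv hΓmpos (hΓm0 ▸ isUnit_one)
  have hΓm_inv_0 : matCoeff (Ring.inverse Γm) 0 = 1 := by
    have h := matCoeff_mul_of_nonpos_of_le (k := 0) hΓmpos hΓm_inv_pos
    rwa [hΓm_inv, hΓm0, one_mul, matCoeff_one, if_pos rfl, eq_comm] at h
  refine ⟨hw, hw ▸ ?_, Ring.inverse_mul_cancel_left g _ hg, hΓm_inv_0, hΓm_inv_pos⟩
  exact matCoeff_neg_eq_zero_of_mul_eq_one (Ring.mul_inverse_cancel Γp hΓp) hΓpneg hΓp0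
end

section
/- Let Γ₋(t, z) be invertible and of the form Id + O(z⁻¹), and suppose the jump matrix has the form J(t,z) = g(t,z)⁻¹γ(z) with g(t,·) entire (only nonnegative powers of z) and invertible. Then Ξ_t := (∂_t J) J⁻¹ = -g⁻¹ ∂_t g has only nonnegative powers of z, and consequently the contour integral ∮ Tr(Ξ_{t'} ∂_z Ξ_t - (∂_z Ξ_{t'}) Ξ_t) dz/(2πi) vanishes; hence the Malgrange form ω_M is closed. -/
open LaurentPolynomial

/-- Formal `z`-derivative of a Laurent polynomial. -/
noncomputable def lderiv (p : LaurentPolynomial ℂ) : LaurentPolynomial ℂ :=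
  p.coeff.sum fun k a => LaurentPolynomial.C (k • a) * LaurentPolynomial.T (k - 1)

/-! Since `Ξ_t = -g⁻¹ ∂_t g` is built from entire loops, it lies in the subring of matrices
whose entries have no negative powers of `z`. That subring is stable under `∂_z`, so the
integrand `Tr(Ξ_{t'} ∂_z Ξ_t − (∂_z Ξ_{t'}) Ξ_t)` lies in it too and has no `z⁻¹` coefficient. -/

namespace LaurentPolynomial

variable (R : Type*) [Ring R]

def nonnegSubring : Subring R[T;T⁻¹] where
  carrier := {p | ∀ k < 0, p.coeff k = 0}
  mul_mem' {p q} hp hq k hk := by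
    rw [AddMonoidAlgebra.coeff_mul]
    refine Finset.sum_eq_zero fun a ha => Finset.sum_eq_zero fun b hb => ?_
    have ha0 : 0 ≤ a := not_lt.mp fun h => Finsupp.mem_support_iff.mp ha (hp a h)
    have hb0 : 0 ≤ b := not_lt.mp fun h => Finsupp.mem_support_iff.mp hb (hq b h)
    exact if_neg (by omega)
  one_mem' k hk := by
    rw [← T_zero, T_apply, if_neg hk.ne']
  add_mem' {p q} hp hq k hk := by
    rw [AddMonoidAlgebra.coeff_add, Finsupp.add_apply, hp k hk, hq k hk, add_zero]
  zero_mem' _ _ := rfl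
  neg_mem' {p} hp k hk := by
    rw [AddMonoidAlgebra.coeff_neg, Finsupp.neg_apply, hp k hk, neg_zero]

variable {R}

theorem coeff_neg_one_trace_eq_zero {ι : Type*} [Fintype ι] [DecidableEq ι]
    {M : Matrix ι ι R[T;T⁻¹]} (hM : M ∈ (nonnegSubring R).matrix) :
    M.trace.coeff (-1) = 0 :=
  Subring.sum_mem _ (fun i _ => hM i i) (-1) (by norm_num)

end LaurentPolynomial

theorem lderiv_mem_nonnegSubring {p : LaurentPolynomial ℂ} (hp : p ∈ nonnegSubring ℂ) :
    lderiv p ∈ nonnegSubring ℂ := by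
  intro k hk
  rw [lderiv, AddMonoidAlgebra.coeff_finsuppSum, Finsupp.sum_apply]
  refine Finset.sum_eq_zero fun m hm => ?_
  have hm0 : 0 ≤ m := not_lt.mp fun h => Finsupp.mem_support_iff.mp hm (hp m h)
  beta_reduce
  rw [← single_eq_C_mul_T, AddMonoidAlgebra.coeff_single, Finsupp.single_apply]
  split_ifs with h
  · rw [show m = 0 by omega, zero_smul]
  · rfl

theorem map_lderiv_mem_matrix {ι : Type*} [Fintype ι] [DecidableEq ι]
    {M : Matrix ι ι (LaurentPolynomial ℂ)} (hM : M ∈ (nonnegSubring ℂ).matrix) :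
    M.map lderiv ∈ (nonnegSubring ℂ).matrix :=
  fun i j => lderiv_mem_nonnegSubring (hM i j)

theorem matCoeff_eq_zero_iff_mem_matrix {n : ℕ}
    {M : Matrix (Fin n) (Fin n) (LaurentPolynomial ℂ)} :
    (∀ k < 0, matCoeff M k = 0) ↔ M ∈ (nonnegSubring ℂ).matrix := by
  simp only [← Matrix.ext_iff, matCoeff, Matrix.of_apply, Matrix.zero_apply]
  exact ⟨fun h i j k hk => h k hk i j, fun h k hk i j => h i j k hk⟩

theorem malgrange_form_closed_general {n : ℕ}
    (g γ Dg Dg' DJ DJ' : Matrix (Fin n) (Fin n) (LaurentPolynomial ℂ))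
    (hgu : IsUnit g) (hγu : IsUnit γ)
    -- `g` is entire and invertible: `g` and `g⁻¹` have only nonnegative modes
    (hginvpos : ∀ k : ℤ, k < 0 → matCoeff (Ring.inverse g) k = 0)
    -- the `t`- and `t'`-derivatives of `g` have only nonnegative modes
    (hDgpos : ∀ k : ℤ, k < 0 → matCoeff Dg k = 0)
    (hDg'pos : ∀ k : ℤ, k < 0 → matCoeff Dg' k = 0)
    -- Leibniz rule for `∂_t J` and `∂_{t'} J` with `J = g⁻¹γ`, `∂γ = 0`
    (hDJ : DJ = -(Ring.inverse g * Dg * (Ring.inverse g * γ)))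
    (hDJ' : DJ' = -(Ring.inverse g * Dg' * (Ring.inverse g * γ))) :
    DJ * Ring.inverse (Ring.inverse g * γ) = -(Ring.inverse g * Dg) ∧
    (∀ k : ℤ, k < 0 → matCoeff (DJ * Ring.inverse (Ring.inverse g * γ)) k = 0) ∧
    (Matrix.trace
      ((DJ' * Ring.inverse (Ring.inverse g * γ)) *
          (DJ * Ring.inverse (Ring.inverse g * γ)).map lderiv
        - (DJ' * Ring.inverse (Ring.inverse g * γ)).map lderiv *
          (DJ * Ring.inverse (Ring.inverse g * γ)))).coeff (-1) = 0 := by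
  have hJ : IsUnit (Ring.inverse g * γ) := (isUnit_ringInverse.mpr hgu).mul hγu
  have hΞ (D : Matrix (Fin n) (Fin n) (LaurentPolynomial ℂ)) :
      -(Ring.inverse g * D * (Ring.inverse g * γ)) * Ring.inverse (Ring.inverse g * γ) =
        -(Ring.inverse g * D) := by
    rw [neg_mul, mul_assoc, Ring.mul_inverse_cancel _ hJ, mul_one]
  rw [matCoeff_eq_zero_iff_mem_matrix] at hginvpos hDgpos hDg'pos ⊢
  have hΞt : -(Ring.inverse g * Dg) ∈ (nonnegSubring ℂ).matrix :=
    neg_mem (mul_mem hginvpos hDgpos)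
  have hΞt' : -(Ring.inverse g * Dg') ∈ (nonnegSubring ℂ).matrix :=
    neg_mem (mul_mem hginvpos hDg'pos)
  subst hDJ hDJ'
  rw [hΞ, hΞ]
  exact ⟨rfl, hΞt, coeff_neg_one_trace_eq_zero <| sub_mem
    (mul_mem hΞt' (map_lderiv_mem_matrix hΞt)) (mul_mem (map_lderiv_mem_matrix hΞt') hΞt)⟩

/-- Lemma 2.8 of Cafasso–Wu (closedness of the Malgrange form): for a jump
matrix `J = g⁻¹γ` with `g` entire (only nonnegative powers of `z`, as is its
inverse) and `t`-derivatives `∂_t J = ∂_t(g⁻¹)·γ = -g⁻¹(∂_t g)g⁻¹γ`, the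
quantity `Ξ_t := (∂_t J)J⁻¹` equals `-g⁻¹∂_t g`, hence has only nonnegative
powers of `z`; consequently
`∮ Tr(Ξ_{t'} ∂_z Ξ_t − (∂_z Ξ_{t'})Ξ_t) dz/(2πi) = 0`. -/
theorem malgrange_form_closed {n : ℕ}
    (g γ Dg Dg' DJ DJ' : Matrix (Fin n) (Fin n) (LaurentPolynomial ℂ))
    (hgu : IsUnit g) (hγu : IsUnit γ)
    -- `g` is entire and invertible: `g` and `g⁻¹` have only nonnegative modes
    (hgpos : ∀ k : ℤ, k < 0 → matCoeff g k = 0)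
    (hginvpos : ∀ k : ℤ, k < 0 → matCoeff (Ring.inverse g) k = 0)
    -- the `t`- and `t'`-derivatives of `g` have only nonnegative modes
    (hDgpos : ∀ k : ℤ, k < 0 → matCoeff Dg k = 0)
    (hDg'pos : ∀ k : ℤ, k < 0 → matCoeff Dg' k = 0)
    -- Leibniz rule for `∂_t J` and `∂_{t'} J` with `J = g⁻¹γ`, `∂γ = 0`
    (hDJ : DJ = -(Ring.inverse g * Dg * (Ring.inverse g * γ)))
    (hDJ' : DJ' = -(Ring.inverse g * Dg' * (Ring.inverse g * γ))) :
    DJ * Ring.inverse (Ring.inverse g * γ) = -(Ring.inverse g * Dg) ∧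
    (∀ k : ℤ, k < 0 → matCoeff (DJ * Ring.inverse (Ring.inverse g * γ)) k = 0) ∧
    (Matrix.trace
      ((DJ' * Ring.inverse (Ring.inverse g * γ)) *
          (DJ * Ring.inverse (Ring.inverse g * γ)).map lderiv
        - (DJ' * Ring.inverse (Ring.inverse g * γ)).map lderiv *
          (DJ * Ring.inverse (Ring.inverse g * γ)))).coeff (-1) = 0 :=
  malgrange_form_closed_general g γ Dg Dg' DJ DJ' hgu hγu hginvpos hDgpos hDg'pos hDJ hDJ'
end
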